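/- Let H be a complex Hilbert space with dim H ≥ 3 and let φ : B_s(H) → B_s(H) be a surjective map such that for all A, B, C ∈ B_s(H), A − B ↔_q C if and only if φ(A) − φ(B) ↔_q φ(C). Then φ preserves quasi-commutativity in both directions: for all A, B ∈ B_s(H), A ↔_q B if and only if φ(A) ↔_q φ(B). -/

import Mathlib

noncomputable section

open scoped InnerProductSpace

variable {H : Type*} [NormedAddCommGroup H] [InnerProductSpace ℂ H] [CompleteSpace H]

/-- `A ↔_q B`: the self-adjoint operators `A` and `B` quasi-commute, i.e.
they either commute or anti-commute. -/
def CommQ (A B : selfAdjoint (H →L[ℂ] H)) : Prop :=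
  (A : H →L[ℂ] H) * (B : H →L[ℂ] H) = (B : H →L[ℂ] H) * (A : H →L[ℂ] H) ∨
  (A : H →L[ℂ] H) * (B : H →L[ℂ] H) + (B : H →L[ℂ] H) * (A : H →L[ℂ] H) = 0

lemma commQ_symm {A B : selfAdjoint (H →L[ℂ] H)} (h : CommQ A B) : CommQ B A := by
  rcases h with h | h
  · exact Or.inl h.symm
  · exact Or.inr (by rw [add_comm]; exact h)

omit [CompleteSpace H] in
lemma exists_const_of_mem_span (T : H →L[ℂ] H)
    (h : ∀ x : H, T x ∈ Submodule.span ℂ ({x} : Set H)) :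
    ∃ c : ℂ, ∀ x : H, T x = c • x := by
  by_cases hH : ∀ x : H, x = 0
  · exact ⟨0, fun x => by rw [hH x]; simp⟩
  push_neg at hH
  obtain ⟨x0, hx0⟩ := hH
  obtain ⟨c, hc⟩ := Submodule.mem_span_singleton.mp (h x0)
  refine ⟨c, fun y => ?_⟩
  by_cases hy : ∃ t : ℂ, y = t • x0
  · obtain ⟨t, rfl⟩ := hy
    rw [map_smul, ← hc, smul_comm]
  · obtain ⟨b, hb⟩ := Submodule.mem_span_singleton.mp (h y)
    obtain ⟨a, ha⟩ := Submodule.mem_span_singleton.mp (h (x0 + y))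
    rw [map_add, ← hc, ← hb, smul_add] at ha
    have hab : a = b := by
      by_contra hne
      apply hy
      refine ⟨(a - c) / (b - a), ?_⟩
      have h1 : (b - a) • y = (a - c) • x0 := by
        rw [← sub_eq_zero] at ha ⊢
        rw [← sub_eq_zero]
        linear_combination (norm := module) -ha
      have hba : b - a ≠ 0 := sub_ne_zero.mpr (Ne.symm hne)
      have h2 := congrArg (fun v => (b - a)⁻¹ • v) h1
      simp only [smul_smul, inv_mul_cancel₀ hba, one_smul] at h2
      rw [h2, div_eq_inv_mul]
    subst hab
    have hac : a = c := by
      have h1 : (a - c) • x0 = 0 := by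
        rw [← sub_eq_zero] at ha
        linear_combination (norm := module) ha
      rcases smul_eq_zero.mp h1 with h | h
      · exact sub_eq_zero.mp h
      · exact absurd h hx0
    rw [← hb, hac]

lemma mem_span_of_forall_commQ (Z : selfAdjoint (H →L[ℂ] H))
    (h : ∀ C : selfAdjoint (H →L[ℂ] H), CommQ Z C) (x : H) :
    (Z : H →L[ℂ] H) x ∈ Submodule.span ℂ ({x} : Set H) := by
  set K := Submodule.span ℂ ({x} : Set H) with hK
  set P : H →L[ℂ] H := K.subtypeL ∘L K.orthogonalProjectionOnto with hPdef
  have hP : IsSelfAdjoint P := isSelfAdjoint_starProjection K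
  have hPx : P x = x := by
    exact Submodule.starProjection_eq_self_iff.mpr (Submodule.mem_span_singleton_self x)
  have hrange : ∀ y : H, P y ∈ K := fun y => (K.orthogonalProjectionOnto y).2
  rcases h ⟨P, hP⟩ with hcomm | hanti
  · have h1 := DFunLike.congr_fun hcomm x
    simp only [ContinuousLinearMap.mul_apply, hPx] at h1
    rw [h1]
    exact hrange _
  · have h1 := DFunLike.congr_fun hanti x
    simp only [ContinuousLinearMap.add_apply, ContinuousLinearMap.mul_apply, hPx,
      ContinuousLinearMap.zero_apply] at h1
    have h2 : (Z : H →L[ℂ] H) x = -(P ((Z : H →L[ℂ] H) x)) := by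
      rw [eq_neg_iff_add_eq_zero]; exact h1
    rw [h2]
    exact neg_mem (hrange _)

theorem stmt16
    (hdim : 3 ≤ Module.rank ℂ H)
    (φ : selfAdjoint (H →L[ℂ] H) → selfAdjoint (H →L[ℂ] H))
    (hsurj : Function.Surjective φ)
    (hpres : ∀ A B C : selfAdjoint (H →L[ℂ] H),
      CommQ (A - B) C ↔ CommQ (φ A - φ B) (φ C)) :
    ∀ A B : selfAdjoint (H →L[ℂ] H), CommQ A B ↔ CommQ (φ A) (φ B) := by
  obtain ⟨Z, hZ⟩ := hsurj 0
  have hstar0 : ∀ X C, CommQ (X - Z) C ↔ CommQ (φ X) (φ C) := by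
    intro X C
    have h := hpres X Z C
    rwa [hZ, sub_zero] at h
  have hsymm : ∀ X C, CommQ (X - Z) C ↔ CommQ (C - Z) X := by
    intro X C
    rw [hstar0 X C, hstar0 C X]
    constructor <;> intro h <;> exact commQ_symm h
  -- Z quasi-commutes with every self-adjoint operator
  have hZall : ∀ C : selfAdjoint (H →L[ℂ] H), CommQ Z C := by
    intro C
    have h0 : CommQ (Z - Z) (C + Z) := by
      refine Or.inl ?_
      simp
    have h1 := (hsymm Z (C + Z)).mp h0
    rw [add_sub_cancel_right] at h1
    exact commQ_symm h1
  -- hence Z is a scalar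
  obtain ⟨c, hc⟩ := exists_const_of_mem_span _ (mem_span_of_forall_commQ Z hZall)
  have hZop : (Z : H →L[ℂ] H) = c • (1 : H →L[ℂ] H) := by
    ext h; simp [hc]
  -- build two orthonormal vectors
  have hex : ∃ x : H, x ≠ 0 := by
    rw [← rank_pos_iff_exists_ne_zero (R := ℂ)]
    exact lt_of_lt_of_le (by norm_num) hdim
  obtain ⟨x, hx⟩ := hex
  set e1 : H := ((‖x‖ : ℂ))⁻¹ • x with he1def
  have he1norm : ‖e1‖ = 1 := by
    rw [he1def, norm_smul]
    simp [norm_ne_zero_iff.mpr hx, inv_mul_cancel₀ (norm_ne_zero_iff.mpr hx)]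
  have he1ne : e1 ≠ 0 := by
    intro h0; rw [h0, norm_zero] at he1norm; norm_num at he1norm
  obtain ⟨y, hyK, hyne⟩ : ∃ y : H, y ∈ (Submodule.span ℂ ({e1} : Set H))ᗮ ∧ y ≠ 0 := by
    set K := Submodule.span ℂ ({e1} : Set H)
    have hne : Kᗮ ≠ ⊥ := by
      intro hbot
      have htop : K = ⊤ := Submodule.orthogonal_eq_bot_iff.mp hbot
      have h1 : Module.rank ℂ K ≤ 1 := by
        simpa using rank_span_le (R := ℂ) ({e1} : Set H)
      have h2 : Module.rank ℂ H ≤ 1 := by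
        rw [← rank_top ℂ H, ← htop]; exact h1
      exact absurd (hdim.trans h2) (by norm_num)
    obtain ⟨y, hy, hyne⟩ := (Submodule.ne_bot_iff _).mp hne
    exact ⟨y, hy, hyne⟩
  set e2 : H := ((‖y‖ : ℂ))⁻¹ • y with he2def
  have he2norm : ‖e2‖ = 1 := by
    rw [he2def, norm_smul]
    simp [norm_ne_zero_iff.mpr hyne, inv_mul_cancel₀ (norm_ne_zero_iff.mpr hyne)]
  have h11 : ⟪e1, e1⟫_ℂ = 1 := by
    rw [inner_self_eq_norm_sq_to_K, he1norm]; norm_num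
  have h22 : ⟪e2, e2⟫_ℂ = 1 := by
    rw [inner_self_eq_norm_sq_to_K, he2norm]; norm_num
  have h12 : ⟪e1, e2⟫_ℂ = 0 := by
    have hy0 : ⟪e1, y⟫_ℂ = 0 :=
      (Submodule.mem_orthogonal _ _).mp hyK e1 (Submodule.mem_span_singleton_self e1)
    rw [he2def, inner_smul_right, hy0, mul_zero]
  have h21 : ⟪e2, e1⟫_ℂ = 0 := by rw [← inner_conj_symm, h12, map_zero]
  -- the operators
  set P1 : H →L[ℂ] H := (innerSL ℂ e1).smulRight e1 with hP1
  set Cop : H →L[ℂ] H := (innerSL ℂ e2).smulRight e1 + (innerSL ℂ e1).smulRight e2 with hCop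
  have hP1a : ∀ h : H, P1 h = ⟪e1, h⟫_ℂ • e1 := fun h => rfl
  have hCa : ∀ h : H, Cop h = ⟪e2, h⟫_ℂ • e1 + ⟪e1, h⟫_ℂ • e2 := fun h => rfl
  have hP1sa : IsSelfAdjoint P1 := by
    rw [ContinuousLinearMap.isSelfAdjoint_iff_isSymmetric]
    intro u v
    simp [hP1a, inner_smul_left, inner_smul_right]
    ring
  have hCsa : IsSelfAdjoint Cop := by
    rw [ContinuousLinearMap.isSelfAdjoint_iff_isSymmetric]
    intro u v
    simp [hCa, inner_smul_left, inner_smul_right, inner_add_left, inner_add_right]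
    ring
  have hkey : P1 * Cop + Cop * P1 = Cop := by
    ext h
    simp [ContinuousLinearMap.mul_apply, hP1a, hCa, inner_add_right, inner_smul_right,
      h11, h12, h21, smul_smul, smul_add, he1norm]
  -- c is real
  have hcr : (starRingEnd ℂ) c = c := by
    have hsa : star (Z : H →L[ℂ] H) = (Z : H →L[ℂ] H) := Z.2
    rw [hZop, star_smul, star_one] at hsa
    have h1 := DFunLike.congr_fun hsa e1
    simp only [ContinuousLinearMap.smul_apply, ContinuousLinearMap.one_apply] at h1
    exact smul_left_injective ℂ he1ne h1
  -- the self-adjoint elements X and C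
  have hXsa : IsSelfAdjoint ((2 * c) • P1) := by
    rw [IsSelfAdjoint, star_smul, hP1sa.star_eq]
    congr 1
    simp [hcr]
  set Xs : selfAdjoint (H →L[ℂ] H) := ⟨(2 * c) • P1, hXsa⟩ with hXs
  set Cs : selfAdjoint (H →L[ℂ] H) := ⟨Cop, hCsa⟩ with hCs
  -- Xs - Z anticommutes with Cs
  have h1 : CommQ (Xs - Z) Cs := by
    refine Or.inr ?_
    have hco : ((Xs - Z : selfAdjoint (H →L[ℂ] H)) : H →L[ℂ] H)
        = (2 * c) • P1 - c • (1 : H →L[ℂ] H) := by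
      rw [AddSubgroup.coe_sub, hZop]
    rw [hco]
    show ((2 * c) • P1 - c • 1) * Cop + Cop * ((2 * c) • P1 - c • 1) = 0
    have expand : ((2 * c) • P1 - c • 1) * Cop + Cop * ((2 * c) • P1 - c • 1)
        = (2 * c) • (P1 * Cop + Cop * P1) - (2 * c) • Cop := by
      simp only [sub_mul, mul_sub, smul_mul_assoc, mul_smul_comm, one_mul, mul_one, smul_add]
      module
    rw [expand, hkey, sub_self]
  have h2 := (hsymm Xs Cs).mp h1
  -- extract c = 0
  have hc0 : c = 0 := by
    have hcoC : ((Cs - Z : selfAdjoint (H →L[ℂ] H)) : H →L[ℂ] H)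
        = Cop - c • (1 : H →L[ℂ] H) := by
      rw [AddSubgroup.coe_sub, hZop]
    rcases h2 with h | h
    · rw [hcoC] at h
      have hXco : ((Xs : selfAdjoint (H →L[ℂ] H)) : H →L[ℂ] H) = (2 * c) • P1 := rfl
      rw [hXco] at h
      have h3 := DFunLike.congr_fun h e1
      simp only [ContinuousLinearMap.mul_apply, ContinuousLinearMap.sub_apply,
        ContinuousLinearMap.smul_apply, ContinuousLinearMap.one_apply,
        hP1a, hCa, h11, h12, h21, one_smul, zero_smul, zero_add, add_zero,
        inner_sub_right, inner_smul_right, inner_add_right, map_sub, map_smul,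
        smul_sub, smul_smul] at h3
      -- take inner product with e2
      have h4 := congrArg (fun v => ⟪e2, v⟫_ℂ) h3
      simp only [inner_sub_right, inner_add_right, inner_smul_right, h21, h22,
        mul_zero, mul_one, sub_zero, zero_sub] at h4
      -- h4 should reduce to an equation forcing c = 0
      rw [inner_zero_right, mul_zero] at h4
      linear_combination h4 / 2
    · rw [hcoC] at h
      have hXco : ((Xs : selfAdjoint (H →L[ℂ] H)) : H →L[ℂ] H) = (2 * c) • P1 := rfl
      rw [hXco] at h
      have h3 := DFunLike.congr_fun h e1
      simp only [ContinuousLinearMap.add_apply, ContinuousLinearMap.mul_apply,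
        ContinuousLinearMap.sub_apply, ContinuousLinearMap.smul_apply,
        ContinuousLinearMap.one_apply, ContinuousLinearMap.zero_apply,
        hP1a, hCa, h11, h12, h21, one_smul, zero_smul, zero_add, add_zero,
        inner_sub_right, inner_smul_right, inner_add_right, map_sub, map_smul,
        smul_sub, smul_smul] at h3
      have h4 := congrArg (fun v => ⟪e2, v⟫_ℂ) h3
      simp only [inner_sub_right, inner_add_right, inner_smul_right, inner_zero_right,
        h21, h22, mul_zero, mul_one, sub_zero, zero_sub] at h4
      rw [add_zero] at h4
      linear_combination h4 / 2
  -- hence Z = 0 and we are done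
  have hZ0 : Z = 0 := by
    apply Subtype.ext
    rw [hZop, hc0, zero_smul]
    rfl
  intro A B
  have h := hstar0 A B
  rwa [hZ0, sub_zero] at h
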